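/- Let S be the zero-union of finite semigroups S₁, …, Sₙ and let NC be the set of indices i with Sᵢ non-commutative. If |NC| ≥ 2, then the commuting graph of S is the graph join of the commuting graphs of the Sᵢ for i ∈ NC. -/

import Mathlib

open SimpleGraph

/-- The center of a magma/semigroup: elements commuting with everything. -/
def sgCenter (S : Type*) [Mul S] : Set S := {x | ∀ y, x * y = y * x}

/-- The commuting graph of a semigroup: vertices are non-central elements,
distinct vertices adjacent iff they commute. -/
def commGraph (S : Type*) [Mul S] : SimpleGraph {x : S // x ∉ sgCenter S} where
  Adj x y := x ≠ y ∧ (x : S) * y = (y : S) * x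
  symm := ⟨fun x y ⟨h, h'⟩ => ⟨h.symm, h'.symm⟩⟩
  loopless := ⟨fun x ⟨h, _⟩ => h rfl⟩

/-- The extended commuting graph of a semigroup: vertices are all elements,
distinct vertices adjacent iff they commute. -/
def extCommGraph (S : Type*) [Mul S] : SimpleGraph S where
  Adj x y := x ≠ y ∧ x * y = y * x
  symm := ⟨fun x y ⟨h, h'⟩ => ⟨h.symm, h'.symm⟩⟩
  loopless := ⟨fun x ⟨h, _⟩ => h rfl⟩

/-- The graph join of two graphs on disjoint vertex sets. -/
def graphJoin {V W : Type*} (G : SimpleGraph V) (H : SimpleGraph W) :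
    SimpleGraph (V ⊕ W) where
  Adj x y := match x, y with
    | .inl a, .inl b => G.Adj a b
    | .inr a, .inr b => H.Adj a b
    | .inl _, .inr _ => True
    | .inr _, .inl _ => True
  symm := ⟨by rintro (a|a) (b|b) h <;> simp_all [SimpleGraph.Adj.symm]⟩
  loopless := ⟨by rintro (a|a) h; exacts [G.loopless.irrefl a h, H.loopless.irrefl a h]⟩

/-- The graph join of a family of graphs on disjoint vertex sets. -/
def graphJoinFam {ι : Type*} {V : ι → Type*} (G : ∀ i, SimpleGraph (V i)) :
    SimpleGraph (Σ i, V i) where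
  Adj x y := x.1 ≠ y.1 ∨ ∃ a b : V x.1, (G x.1).Adj a b ∧ x = ⟨x.1, a⟩ ∧ y = ⟨x.1, b⟩
  symm := ⟨by
    rintro ⟨i, a⟩ ⟨j, b⟩ (h | ⟨a', b', hadj, h1, h2⟩)
    · exact Or.inl h.symm
    · cases h1; cases h2
      exact Or.inr ⟨b', a, hadj.symm, rfl, rfl⟩⟩
  loopless := ⟨by
    rintro ⟨i, a⟩ (h | ⟨a', b', hadj, h1, h2⟩)
    · exact h rfl
    · cases h1
      cases h2
      exact (G i).loopless.irrefl _ hadj⟩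

/-- The strong product of two simple graphs. -/
def strongProd {V W : Type*} (G : SimpleGraph V) (H : SimpleGraph W) :
    SimpleGraph (V × W) where
  Adj x y := x ≠ y ∧ (x.1 = y.1 ∨ G.Adj x.1 y.1) ∧ (x.2 = y.2 ∨ H.Adj x.2 y.2)
  symm := ⟨fun x y ⟨h, h1, h2⟩ =>
    ⟨h.symm, h1.imp Eq.symm (fun h => G.symm.symm _ _ h), h2.imp Eq.symm (fun h => H.symm.symm _ _ h)⟩⟩
  loopless := ⟨fun x ⟨h, _⟩ => h rfl⟩

/-- The strong product of a family of simple graphs. -/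
def strongProdFam {ι : Type*} {V : ι → Type*} (G : ∀ i, SimpleGraph (V i)) :
    SimpleGraph (∀ i, V i) where
  Adj x y := x ≠ y ∧ ∀ i, x i = y i ∨ (G i).Adj (x i) (y i)
  symm := ⟨fun x y ⟨h, h'⟩ => ⟨h.symm, fun i => (h' i).imp Eq.symm (fun h => (G i).symm.symm _ _ h)⟩⟩
  loopless := ⟨fun x ⟨h, _⟩ => h rfl⟩

/-- `p` is a left path in the commuting graph of `S`. -/
def IsLeftPath {S : Type*} [Mul S] {u v : {x : S // x ∉ sgCenter S}}
    (p : (commGraph S).Walk u v) : Prop :=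
  p.IsPath ∧ u ≠ v ∧ ∀ w ∈ p.support, (u : S) * (w : S) = (v : S) * (w : S)

/-- The commuting graph of `S` contains a left path. -/
def HasLeftPath (S : Type*) [Mul S] : Prop :=
  ∃ (u v : {x : S // x ∉ sgCenter S}) (p : (commGraph S).Walk u v), IsLeftPath p

/-- The knit degree of `S`: the length of a shortest left path in its commuting graph. -/
noncomputable def knitDegree (S : Type*) [Mul S] : ℕ :=
  sInf {m | ∃ (u v : {x : S // x ∉ sgCenter S}) (p : (commGraph S).Walk u v),
    IsLeftPath p ∧ p.length = m}

/-- `p` is a *-left path in the extended commuting graph of `S`. -/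
def IsStarLeftPath {S : Type*} [Mul S] {u v : S}
    (p : (extCommGraph S).Walk u v) : Prop :=
  p.IsPath ∧ u ≠ v ∧ ∀ w ∈ p.support, u * w = v * w

/-- The extended commuting graph of `S` contains a *-left path. -/
def HasStarLeftPath (S : Type*) [Mul S] : Prop :=
  ∃ (u v : S) (p : (extCommGraph S).Walk u v), IsStarLeftPath p

/-- The *-knit degree of `S`. -/
noncomputable def starKnitDegree (S : Type*) [Mul S] : ℕ :=
  sInf {m | ∃ (u v : S) (p : (extCommGraph S).Walk u v), IsStarLeftPath p ∧ p.length = m}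

/-- The zero-union of a family of semigroups: their disjoint union plus a new zero. -/
def ZeroUnion {n : ℕ} (S : Fin n → Type*) : Type _ := Option (Σ i, S i)

instance {n : ℕ} (S : Fin n → Type*) [∀ i, Mul (S i)] : Mul (ZeroUnion S) where
  mul x y := match x, y with
    | some ⟨i, a⟩, some ⟨j, b⟩ =>
      if h : j = i then some ⟨i, a * (h ▸ b)⟩ else none
    | _, _ => none

/-!
A product of elements from different components is the new zero, which is central. Hence
elements of different components always commute, an element `a` of `Sᵢ` is central in the
zero-union exactly when it is central in `Sᵢ` (so non-central elements only occur in the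
non-commutative components), and two elements of the same `Sᵢ` commute in the zero-union
exactly when they commute in `Sᵢ`.
-/

theorem graphJoinFam_adj_mk_mk {ι : Type*} {V : ι → Type*} {G : ∀ i, SimpleGraph (V i)}
    {i : ι} {a b : V i} :
    (graphJoinFam G).Adj ⟨i, a⟩ ⟨i, b⟩ ↔ (G i).Adj a b := by
  refine ⟨?_, fun h => Or.inr ⟨a, b, h, rfl, rfl⟩⟩
  rintro (h | ⟨a', b', h, ha, hb⟩)
  · exact absurd rfl h
  · rw [Sigma.mk.inj_iff, heq_eq_eq] at ha hb
    rwa [ha.2, hb.2]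

theorem not_forall_mul_comm_of_notMem_sgCenter {T : Type*} [Mul T] {a : T}
    (ha : a ∉ sgCenter T) : ¬ ∀ x y : T, x * y = y * x :=
  fun h => ha (h a)

namespace ZeroUnion

variable {n : ℕ} {S : Fin n → Type*}

def of (i : Fin n) (a : S i) : ZeroUnion S := some ⟨i, a⟩

theorem of_injective (i : Fin n) : Function.Injective (of (S := S) i) := fun _ _ h =>
  eq_of_heq (Sigma.mk.inj_iff.mp (Option.some_injective _ h)).2

theorem of_ne_of_ne {i j : Fin n} (hij : i ≠ j) (a : S i) (b : S j) : of i a ≠ of j b :=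
  fun h => hij (Sigma.mk.inj_iff.mp (Option.some_injective _ h)).1

variable [∀ i, Mul (S i)]

instance : MulZeroClass (ZeroUnion S) where
  zero := none
  zero_mul _ := rfl
  mul_zero x := by rcases x with _ | ⟨i, a⟩ <;> rfl

theorem zero_mem_sgCenter : (0 : ZeroUnion S) ∈ sgCenter (ZeroUnion S) := fun y => by
  rw [zero_mul, mul_zero]

theorem of_mul_of (i : Fin n) (a b : S i) : of i a * of i b = of i (a * b) :=
  dif_pos rfl

theorem of_mul_of_of_ne {i j : Fin n} (hij : i ≠ j) (a : S i) (b : S j) :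
    of i a * of j b = 0 :=
  dif_neg hij.symm

theorem of_mul_of_comm_iff (i : Fin n) (a b : S i) :
    of i a * of i b = of i b * of i a ↔ a * b = b * a := by
  rw [of_mul_of, of_mul_of, (of_injective i).eq_iff]

theorem of_mul_of_comm_of_ne {i j : Fin n} (hij : i ≠ j) (a : S i) (b : S j) :
    of i a * of j b = of j b * of i a := by
  rw [of_mul_of_of_ne hij, of_mul_of_of_ne hij.symm]

theorem of_mem_sgCenter_iff (i : Fin n) (a : S i) :
    of i a ∈ sgCenter (ZeroUnion S) ↔ a ∈ sgCenter (S i) := by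
  refine ⟨fun h b => (of_mul_of_comm_iff i a b).mp (h (of i b)), fun h y => ?_⟩
  rcases y with _ | ⟨j, b⟩
  · exact (zero_mem_sgCenter (of i a)).symm
  · rcases eq_or_ne i j with rfl | hij
    · exact (of_mul_of_comm_iff i a b).mpr (h b)
    · exact of_mul_of_comm_of_ne hij a b

variable (S)

def ofNoncentral
    (p : Σ i : {i : Fin n // ¬ ∀ x y : S i, x * y = y * x}, {a : S i.1 // a ∉ sgCenter (S i.1)}) :
    {x : ZeroUnion S // x ∉ sgCenter (ZeroUnion S)} :=
  ⟨of p.1.1 p.2.1, (of_mem_sgCenter_iff _ _).not.mpr p.2.2⟩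

theorem ofNoncentral_bijective : Function.Bijective (ofNoncentral S) := by
  constructor
  · rintro ⟨⟨i, hi⟩, ⟨a, ha⟩⟩ ⟨⟨j, hj⟩, ⟨b, hb⟩⟩ h
    obtain ⟨rfl, hab⟩ := Sigma.mk.inj_iff.mp (Option.some_injective _ (Subtype.ext_iff.mp h))
    cases eq_of_heq hab
    rfl
  · rintro ⟨_ | ⟨i, a⟩, hx⟩
    · exact absurd zero_mem_sgCenter hx
    · have ha : a ∉ sgCenter (S i) := (of_mem_sgCenter_iff i a).not.mp hx
      exact ⟨⟨⟨i, not_forall_mul_comm_of_notMem_sgCenter ha⟩, ⟨a, ha⟩⟩, rfl⟩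

theorem commGraph_adj_ofNoncentral_iff {p q} :
    (commGraph (ZeroUnion S)).Adj (ofNoncentral S p) (ofNoncentral S q) ↔
      (graphJoinFam fun i : {i : Fin n // ¬ ∀ x y : S i, x * y = y * x} =>
        commGraph (S i.1)).Adj p q := by
  obtain ⟨⟨i, hi⟩, a⟩ := p
  obtain ⟨⟨j, hj⟩, b⟩ := q
  rcases eq_or_ne i j with rfl | hij
  · rw [graphJoinFam_adj_mk_mk]
    exact and_congr ((ofNoncentral_bijective S).injective.ne_iff.trans sigma_mk_injective.ne_iff)
      (of_mul_of_comm_iff i a.1 b.1)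
  · exact iff_of_true ⟨fun h => of_ne_of_ne hij a.1 b.1 (congrArg Subtype.val h),
      of_mul_of_comm_of_ne hij a.1 b.1⟩ (Or.inl fun h => hij (congrArg Subtype.val h))

end ZeroUnion

open ZeroUnion in
theorem commGraph_zeroUnion_iso_graphJoinFam_general {n : ℕ} (S : Fin n → Type*)
    [∀ i, Semigroup (S i)] :
    Nonempty (commGraph (ZeroUnion S) ≃g
      graphJoinFam (fun i : {i : Fin n // ¬ ∀ x y : S i, x * y = y * x} =>
        commGraph (S i.1))) :=
  ⟨(RelIso.mk (Equiv.ofBijective _ (ofNoncentral_bijective S))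
    (commGraph_adj_ofNoncentral_iff S)).symm⟩

theorem commGraph_zeroUnion_iso_graphJoinFam {n : ℕ} (S : Fin n → Type*)
    [∀ i, Semigroup (S i)] [∀ i, Fintype (S i)] [∀ i, Nonempty (S i)]
    (h2 : ∃ i j : Fin n, i ≠ j ∧ ¬ (∀ x y : S i, x * y = y * x) ∧
      ¬ (∀ x y : S j, x * y = y * x)) :
    Nonempty (commGraph (ZeroUnion S) ≃g
      graphJoinFam (fun i : {i : Fin n // ¬ ∀ x y : S i, x * y = y * x} =>
        commGraph (S i.1))) :=
  commGraph_zeroUnion_iso_graphJoinFam_general S
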